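/- arXiv:1901.07324 — 7 statements merged into one kernel-verified Lean document; each statement's English description precedes it below -/
import Mathlib

section
/- For any real numbers y₁, …, y_d in [0, π) with d ≥ 2, the product over all pairs 1 ≤ j < k ≤ d of sin²(y_j − y_k) is at most 2^(−d(d−1)) · d^d. -/
/-!
Put `zⱼ = exp (2 i yⱼ)` on the unit circle, so that `‖zⱼ - zₖ‖ = 2 |sin (yⱼ - yₖ)|` and the
product of the `sin² (yⱼ - yₖ)` is `2^(-d(d-1)) ‖det V‖²` for the Vandermonde matrix `V` of the
`zⱼ`. AM-GM on the eigenvalues of the positive semidefinite matrix `V Vᴴ` gives the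
Hadamard-type bound `‖det V‖² = det (V Vᴴ) ≤ (tr (V Vᴴ) / d)^d`, and `tr (V Vᴴ) = d²` because
all entries of `V` have norm one.
-/

open Real Finset
open scoped ComplexOrder

theorem Finset.prod_le_sum_div_card_pow {ι : Type*} (s : Finset ι) {z : ι → ℝ}
    (hz : ∀ i ∈ s, 0 ≤ z i) : ∏ i ∈ s, z i ≤ ((∑ i ∈ s, z i) / #s) ^ #s := by
  rcases s.eq_empty_or_nonempty with rfl | hs
  · simp
  have hcard : (0 : ℝ) < #s := by exact_mod_cast hs.card_pos
  have amgm := Real.geom_mean_le_arith_mean s (fun _ ↦ 1) z (fun _ _ ↦ zero_le_one)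
    (by simpa using hcard) hz
  simp only [Real.rpow_one, one_mul, sum_const, nsmul_eq_mul, mul_one] at amgm
  calc ∏ i ∈ s, z i = ((∏ i ∈ s, z i) ^ (#s : ℝ)⁻¹) ^ #s :=
        (Real.rpow_inv_natCast_pow (prod_nonneg hz) hs.card_pos.ne').symm
    _ ≤ ((∑ i ∈ s, z i) / #s) ^ #s := by gcongr; exact Real.rpow_nonneg (prod_nonneg hz) _

theorem Finset.prod_filter_lt_eq_prod_prod_Ioi {ι M : Type*} [Fintype ι] [LinearOrder ι]
    [LocallyFiniteOrderTop ι] [CommMonoid M] (f : ι → ι → M) :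
    ∏ p ∈ univ.filter (fun p : ι × ι => p.1 < p.2), f p.1 p.2 = ∏ i, ∏ j ∈ Ioi i, f i j := by
  rw [prod_sigma']
  exact prod_nbij' (fun p ↦ ⟨p.1, p.2⟩) (fun p ↦ (p.1, p.2)) (by simp) (by simp) (by simp)
    (by simp) (by simp)

theorem Fin.two_mul_card_filter_lt (d : ℕ) :
    2 * (#(univ.filter (fun p : Fin d × Fin d => p.1 < p.2)) : ℤ) = d * (d - 1) := by
  have h : (#(univ.filter (fun p : Fin d × Fin d => p.1 < p.2)) : ℚ) = d * (d - 1) / 2 := by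
    rw [Fintype.card_product_filter_lt, Fintype.card_fin, Nat.cast_choose_two]
  have h2 : 2 * (#(univ.filter (fun p : Fin d × Fin d => p.1 < p.2)) : ℚ) = d * (d - 1) := by
    rw [h]; ring
  exact_mod_cast h2

namespace Complex

theorem norm_exp_I_mul_sub_exp_I_mul (a b : ℝ) :
    ‖exp (I * a) - exp (I * b)‖ = 2 * |Real.sin ((a - b) / 2)| := by
  have hfactor : exp (I * a) - exp (I * b) = exp (I * b) * (exp (I * ↑(a - b)) - 1) := by
    rw [mul_sub, mul_one, ← exp_add]
    push_cast
    ring_nf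
  rw [hfactor, norm_mul, norm_exp_I_mul_ofReal, norm_exp_I_mul_ofReal_sub_one, one_mul, norm_mul,
    Real.norm_eq_abs, Real.norm_eq_abs, abs_two]

end Complex

namespace Matrix

section RCLike

variable {n 𝕜 : Type*} [Fintype n] [DecidableEq n] [RCLike 𝕜]

theorem PosSemidef.re_det_le {A : Matrix n n 𝕜} (hA : A.PosSemidef) :
    RCLike.re A.det ≤ (RCLike.re A.trace / Fintype.card n) ^ Fintype.card n := by
  rw [hA.isHermitian.det_eq_prod_eigenvalues, hA.isHermitian.trace_eq_sum_eigenvalues,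
    ← RCLike.ofReal_prod, ← RCLike.ofReal_sum, RCLike.ofReal_re, RCLike.ofReal_re]
  exact prod_le_sum_div_card_pow univ fun i _ ↦ hA.eigenvalues_nonneg i

theorem norm_det_sq_le (V : Matrix n n 𝕜) :
    ‖V.det‖ ^ 2 ≤ ((∑ i, ∑ j, ‖V i j‖ ^ 2) / Fintype.card n) ^ Fintype.card n := by
  have hdet : (V * Vᴴ).det = ((‖V.det‖ ^ 2 : ℝ) : 𝕜) := by
    rw [det_mul, det_conjTranspose, RCLike.star_def, RCLike.mul_conj, RCLike.ofReal_pow]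
  have htrace : (V * Vᴴ).trace = ((∑ i, ∑ j, ‖V i j‖ ^ 2 : ℝ) : 𝕜) := by
    simp [trace, mul_apply, RCLike.mul_conj]
  simpa [hdet, htrace] using (posSemidef_self_mul_conjTranspose V).re_det_le

end RCLike

theorem norm_det_vandermonde {R : Type*} [NormedCommRing R] [NormMulClass R] [NormOneClass R]
    {d : ℕ} (v : Fin d → R) :
    ‖(vandermonde v).det‖
      = ∏ p ∈ univ.filter (fun p : Fin d × Fin d => p.1 < p.2), ‖v p.1 - v p.2‖ := by
  rw [det_vandermonde, norm_prod, prod_filter_lt_eq_prod_prod_Ioi (fun i j ↦ ‖v i - v j‖)]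
  refine prod_congr rfl fun i _ ↦ ?_
  rw [norm_prod]
  exact prod_congr rfl fun j _ ↦ norm_sub_rev _ _

end Matrix

theorem prod_sin_sq_le_general (d : ℕ) (y : Fin d → ℝ) :
    ∏ p ∈ Finset.univ.filter (fun p : Fin d × Fin d => p.1 < p.2),
        Real.sin (y p.1 - y p.2) ^ 2 ≤ (2 : ℝ) ^ (-(d * (d - 1) : ℤ)) * d ^ d := by
  set pairs := univ.filter (fun p : Fin d × Fin d => p.1 < p.2)
  set V := Matrix.vandermonde fun j ↦ Complex.exp (Complex.I * ↑(2 * y j))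
  have hdet : ‖V.det‖ ^ 2 = 4 ^ #pairs * ∏ p ∈ pairs, Real.sin (y p.1 - y p.2) ^ 2 := by
    rw [Matrix.norm_det_vandermonde, ← prod_pow, ← prod_const, ← prod_mul_distrib]
    refine prod_congr rfl fun p _ ↦ ?_
    rw [Complex.norm_exp_I_mul_sub_exp_I_mul, mul_pow, sq_abs, ← mul_sub,
      mul_div_cancel_left₀ _ two_ne_zero]
    norm_num
  have hbound : ‖V.det‖ ^ 2 ≤ d ^ d := by
    have hentry : ∀ i j, ‖V i j‖ = 1 := fun i j ↦ by
      simp only [V, Matrix.vandermonde_apply, norm_pow, Complex.norm_exp_I_mul_ofReal, one_pow]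
    simpa [hentry, sq] using V.norm_det_sq_le
  rw [← Fin.two_mul_card_filter_lt, zpow_neg, zpow_mul, zpow_natCast, ← div_eq_inv_mul,
    le_div_iff₀' (by positivity)]
  norm_num
  linarith

theorem prod_sin_sq_le (d : ℕ) (hd : 2 ≤ d) (y : Fin d → ℝ)
    (hy : ∀ k, y k ∈ Set.Ico (0 : ℝ) π) :
    ∏ p ∈ Finset.univ.filter (fun p : Fin d × Fin d => p.1 < p.2),
        Real.sin (y p.1 - y p.2) ^ 2 ≤ (2 : ℝ) ^ (-(d * (d - 1) : ℤ)) * d ^ d :=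
  prod_sin_sq_le_general d y
end

section
/- For d ≥ 2 and a > 0, the roots of the polynomial F(x) = ((x + ai)^d + (x − ai)^d)/2 are exactly the d real numbers a·tan(π/(2d) + kπ/d) for k = 0, 1, …, d−1 when d is even, and a·tan(kπ/d) for k = 0, 1, …, d−1 when d is odd; in particular all roots of F are real and distinct. -/
/-!
At `x = a tan θ` with `cos θ ≠ 0` one has `x ± a i = ±(a / cos θ) i e^{∓iθ}`, so by de Moivre
`(x + a i)^d + (x - a i)^d = (a i / cos θ)^d ((1 + (-1)^d) cos dθ - (1 - (-1)^d) i sin dθ)`.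
For the angles `θ_k` the relevant one of `cos dθ_k`, `sin dθ_k` vanishes, so the `a tan θ_k` are
roots. Two of the `θ_k` differ by less than `π`, so their tangents are distinct, and a polynomial of
degree `d` has no further roots.
-/

open Real Finset

noncomputable def rootAngle (d k : ℕ) : ℝ := (if Even d then π / (2 * d) else 0) + k * π / d

lemma rootAngle_eq (d k : ℕ) :
    rootAngle d k = (2 * k + if Even d then 1 else 0) * π / (2 * d) := by
  unfold rootAngle; split_ifs <;> ring

lemma cos_rootAngle_ne_zero {d : ℕ} (hd : d ≠ 0) (k : ℕ) : cos (rootAngle d k) ≠ 0 := by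
  rw [rootAngle_eq, Ne, cos_eq_zero_iff]
  rintro ⟨n, hn⟩
  -- `2k + [d even]` has the parity opposite to `d`, whereas `(2n + 1) d` has the parity of `d`.
  have hd' : (d : ℝ) ≠ 0 := by exact_mod_cast hd
  have hreal : (2 * k + if Even d then 1 else 0 : ℝ) = (2 * n + 1) * d := by
    field_simp at hn
    linear_combination hn
  have hint : (2 * k + if Even d then 1 else 0 : ℤ) = (2 * n + 1) * d := by
    split_ifs at hreal ⊢ <;> exact_mod_cast hreal
  have hparity := congrArg Even hint
  split_ifs at hparity with he <;>
    simp [Int.even_mul, parity_simps, he, ← Int.not_even_iff_odd] at hparity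

lemma tan_rootAngle_injOn (d : ℕ) : Set.InjOn (fun k : ℕ => tan (rootAngle d k)) (Set.Iio d) := by
  intro j (hj : j < d) k (hk : k < d) hjk
  have hd : d ≠ 0 := by omega
  have hsin : sin (rootAngle d j - rootAngle d k) = 0 := by
    simp only [tan_eq_sin_div_cos] at hjk
    rw [div_eq_div_iff (cos_rootAngle_ne_zero hd j) (cos_rootAngle_ne_zero hd k)] at hjk
    rw [sin_sub]; linarith
  have hsub : rootAngle d j - rootAngle d k = ((j : ℝ) - k) / d * π := by
    unfold rootAngle; ring
  have hdpos : (0 : ℝ) < d := by positivity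
  have hj' : (j : ℝ) < d := by exact_mod_cast hj
  have hk' : (k : ℝ) < d := by exact_mod_cast hk
  have hlow : -1 < ((j : ℝ) - k) / d := by
    rw [lt_div_iff₀ hdpos]; linarith [(j.cast_nonneg : (0 : ℝ) ≤ j)]
  have hup : ((j : ℝ) - k) / d < 1 := by
    rw [div_lt_iff₀ hdpos]; linarith [(k.cast_nonneg : (0 : ℝ) ≤ k)]
  rw [hsub, sin_eq_zero_iff_of_lt_of_lt (by nlinarith [pi_pos]) (by nlinarith [pi_pos]),
    mul_eq_zero, div_eq_zero_iff, sub_eq_zero] at hsin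
  rcases hsin with (h | h) | h
  · exact_mod_cast h
  · exact absurd h hdpos.ne'
  · exact absurd h pi_ne_zero

lemma natCast_mul_rootAngle {d : ℕ} (hd : d ≠ 0) (k : ℕ) :
    d * rootAngle d k = (if Even d then π / 2 else 0) + k * π := by
  rw [rootAngle_eq]; field_simp; split_ifs <;> ring

lemma one_add_neg_one_pow_mul_cos_rootAngle {d : ℕ} (hd : d ≠ 0) (k : ℕ) :
    (1 + (-1) ^ d) * cos (d * rootAngle d k) = 0 := by
  rw [natCast_mul_rootAngle hd]
  rcases Nat.even_or_odd d with he | ho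
  · rw [if_pos he, cos_add_nat_mul_pi, cos_pi_div_two, mul_zero, mul_zero]
  · rw [ho.neg_one_pow]; ring

lemma one_sub_neg_one_pow_mul_sin_rootAngle {d : ℕ} (hd : d ≠ 0) (k : ℕ) :
    (1 - (-1) ^ d) * sin (d * rootAngle d k) = 0 := by
  rw [natCast_mul_rootAngle hd]
  rcases Nat.even_or_odd d with he | ho
  · rw [he.neg_one_pow]; ring
  · rw [if_neg (Nat.not_even_iff_odd.mpr ho), zero_add, sin_nat_mul_pi, mul_zero]

open Complex in
lemma add_pow_add_sub_pow_mul_tan (b z : ℂ) (hz : cos z ≠ 0) (d : ℕ) :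
    (b * tan z + b * I) ^ d + (b * tan z - b * I) ^ d
      = (b / cos z * I) ^ d * ((1 + (-1) ^ d) * cos (d * z) - (1 - (-1) ^ d) * sin (d * z) * I) := by
  have hplus : b * tan z + b * I = b / cos z * I * (cos (-z) + sin (-z) * I) := by
    rw [Complex.tan_eq_sin_div_cos, Complex.cos_neg, Complex.sin_neg]
    field_simp
    linear_combination b * sin z * I_sq
  have hminus : b * tan z - b * I = b / cos z * I * (-1 * (cos z + sin z * I)) := by
    rw [Complex.tan_eq_sin_div_cos]
    field_simp
    linear_combination b * sin z * I_sq
  rw [hplus, hminus, mul_pow _ (cos (-z) + _), mul_pow _ (-1 * _), mul_pow (-1 : ℂ),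
    cos_add_sin_mul_I_pow, cos_add_sin_mul_I_pow, mul_neg, Complex.cos_neg, Complex.sin_neg]
  ring

lemma add_pow_add_sub_pow_tan_rootAngle {d : ℕ} (hd : d ≠ 0) (k : ℕ) (a : ℝ) :
    (((a * tan (rootAngle d k) : ℝ) : ℂ) + a * Complex.I) ^ d
      + (((a * tan (rootAngle d k) : ℝ) : ℂ) - a * Complex.I) ^ d = 0 := by
  have hcos : Complex.cos (rootAngle d k) ≠ 0 := by
    exact_mod_cast cos_rootAngle_ne_zero hd k
  have hcos_term : (1 + (-1) ^ d) * Complex.cos (d * rootAngle d k) = 0 := by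
    exact_mod_cast one_add_neg_one_pow_mul_cos_rootAngle hd k
  have hsin_term : (1 - (-1) ^ d) * Complex.sin (d * rootAngle d k) = 0 := by
    exact_mod_cast one_sub_neg_one_pow_mul_sin_rootAngle hd k
  push_cast
  rw [add_pow_add_sub_pow_mul_tan _ _ hcos, hcos_term, hsin_term]
  ring

lemma mul_tan_rootAngle_injOn {a : ℝ} (ha : a ≠ 0) (d : ℕ) :
    Set.InjOn (fun k : ℕ => a * tan (rootAngle d k)) (Set.Iio d) :=
  fun _ hj _ hk h => tan_rootAngle_injOn d hj hk (mul_left_cancel₀ ha h)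

section
open Polynomial
variable {R : Type*} [Ring R]

lemma natDegree_X_add_C_pow_add_X_sub_C_pow_le (c : R) (d : ℕ) :
    ((X + C c) ^ d + (X - C c) ^ d).natDegree ≤ d := by
  compute_degree

lemma coeff_X_add_C_pow_add_X_sub_C_pow_self (c : R) (d : ℕ) :
    ((X + C c) ^ d + (X - C c) ^ d).coeff d = 2 := by
  rw [sub_eq_add_neg, ← C_neg, coeff_add, coeff_X_add_C_pow, coeff_X_add_C_pow]
  simp only [Nat.sub_self, pow_zero, Nat.choose_self, Nat.cast_one, mul_one]
  norm_num

lemma X_add_C_pow_add_X_sub_C_pow_ne_zero [NeZero (2 : R)] (c : R) (d : ℕ) :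
    (X + C c) ^ d + (X - C c) ^ d ≠ 0 := by
  intro h
  have hcoeff := coeff_X_add_C_pow_add_X_sub_C_pow_self c d
  rw [h, coeff_zero] at hcoeff
  exact two_ne_zero hcoeff.symm

end

open Polynomial in
lemma roots_X_add_C_pow_add_X_sub_C_pow {a : ℝ} (ha : a ≠ 0) (d : ℕ) :
    ((X + C (a * Complex.I)) ^ d + (X - C (a * Complex.I)) ^ d).roots
      = ((range d).image fun k : ℕ => ((a * tan (rootAngle d k) : ℝ) : ℂ)).val := by
  refine roots_eq_of_natDegree_le_card_of_ne_zero ?_ ?_ (X_add_C_pow_add_X_sub_C_pow_ne_zero _ d)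
  · simp only [mem_image, mem_range]
    rintro _ ⟨k, hk, rfl⟩
    simpa using add_pow_add_sub_pow_tan_rootAngle (Nat.ne_zero_of_lt hk) k a
  · rw [card_image_of_injOn, card_range]
    · exact natDegree_X_add_C_pow_add_X_sub_C_pow_le _ d
    · intro j hj k hk h
      exact mul_tan_rootAngle_injOn ha d (by simpa using hj) (by simpa using hk)
        (Complex.ofReal_injective h)

open Polynomial in
theorem F_roots_general (d : ℕ) (a : ℝ) (ha : 0 < a) :
    (∀ j < d, ∀ k < d, j ≠ k →
        a * Real.tan ((if Even d then π / (2 * d) else 0) + j * π / d) ≠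
          a * Real.tan ((if Even d then π / (2 * d) else 0) + k * π / d)) ∧
      (∀ x : ℂ, ((x + a * Complex.I) ^ d + (x - a * Complex.I) ^ d) / 2 = 0 ↔
        ∃ k < d, x = ((a * Real.tan ((if Even d then π / (2 * d) else 0) + k * π / d) : ℝ) : ℂ)) := by
  refine ⟨fun j hj k hk hjk h => hjk (mul_tan_rootAngle_injOn ha.ne' d hj hk h), fun x => ?_⟩
  have hP := X_add_C_pow_add_X_sub_C_pow_ne_zero (a * Complex.I) d
  calc ((x + a * Complex.I) ^ d + (x - a * Complex.I) ^ d) / 2 = 0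
      ↔ x ∈ ((X + C (a * Complex.I)) ^ d + (X - C (a * Complex.I)) ^ d).roots := by
        rw [div_eq_zero_iff, or_iff_left two_ne_zero, mem_roots hP, IsRoot.def]
        simp
    _ ↔ _ := by
        rw [roots_X_add_C_pow_add_X_sub_C_pow ha.ne', mem_val, mem_image]
        simp only [mem_range, eq_comm]
        rfl

theorem F_roots (d : ℕ) (hd : 2 ≤ d) (a : ℝ) (ha : 0 < a) :
    (∀ j < d, ∀ k < d, j ≠ k →
        a * Real.tan ((if Even d then π / (2 * d) else 0) + j * π / d) ≠
          a * Real.tan ((if Even d then π / (2 * d) else 0) + k * π / d)) ∧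
      (∀ x : ℂ, ((x + a * Complex.I) ^ d + (x - a * Complex.I) ^ d) / 2 = 0 ↔
        ∃ k < d, x = ((a * Real.tan ((if Even d then π / (2 * d) else 0) + k * π / d) : ℝ) : ℂ)) :=
  F_roots_general d a ha
end

section
/- For all complex x and all real γ, a, d ≥ 2 with sin(dπ/2 + dγ) ≠ 0 and cos(γ + kπ/d) ≠ 0 for all k, the identity ∏_{k=0}^{d−1} (x − tan(γ + kπ/d)) = ½[(1 − i·cot(dπ/2 + dγ))(x + i)^d + (1 + i·cot(dπ/2 + dγ))(x − i)^d] holds. -/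
open Real Finset

/-!
With `w = exp (2 α i)` one has `x - tan α = ((x - i) + w (x + i)) / (1 + w)`. For
`α_k = γ + kπ/d` the `w_k` are `exp (2γi)` times the `d`-th roots of unity, so numerator and
denominator products collapse by `∏ (a + ζ^k b) = a^d - (-b)^d` to
`((x - i)^d - W (x + i)^d) / (1 - W)` with `W = exp (2θi)`, `θ = dπ/2 + dγ`; finally
`i cot θ = (1 + W) / (1 - W)`.
-/

theorem IsPrimitiveRoot.prod_range_add_pow_mul {R : Type*} [CommRing R] [IsDomain R] {ζ : R}
    {n : ℕ} (hζ : IsPrimitiveRoot ζ n) (hn : 0 < n) (a b : R) :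
    ∏ k ∈ range n, (a + ζ ^ k * b) = a ^ n - (-b) ^ n := by
  have h := congrArg (Polynomial.eval a) (X_pow_sub_C_eq_prod hζ hn (rfl : (-b) ^ n = _))
  simp only [Polynomial.eval_sub, Polynomial.eval_pow, Polynomial.eval_X, Polynomial.eval_C,
    Polynomial.eval_prod, mul_neg, sub_neg_eq_add] at h
  exact h.symm

namespace Complex

theorem two_mul_cos_eq_exp_mul (z : ℂ) : 2 * cos z = exp (-z * I) * (1 + exp (2 * z * I)) := by
  rw [cos, mul_add, ← exp_add]
  ring_nf

theorem two_mul_sin_eq_exp_mul (z : ℂ) :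
    2 * sin z = exp (-z * I) * (I * (1 - exp (2 * z * I))) := by
  rw [sin, mul_left_comm, mul_sub, ← exp_add]
  ring_nf

theorem tan_eq_exp_div (z : ℂ) : tan z = I * (1 - exp (2 * z * I)) / (1 + exp (2 * z * I)) := by
  rw [tan_eq_sin_div_cos, ← mul_div_mul_left (sin z) (cos z) two_ne_zero,
    two_mul_sin_eq_exp_mul, two_mul_cos_eq_exp_mul, mul_div_mul_left _ _ (exp_ne_zero _)]

/-- Both sides are junk `0` when `sin z = 0`. -/
theorem I_mul_cot_eq_exp_div (z : ℂ) :
    I * cot z = (1 + exp (2 * z * I)) / (1 - exp (2 * z * I)) := by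
  rw [cot_eq_cos_div_sin, ← mul_div_mul_left (cos z) (sin z) two_ne_zero,
    two_mul_sin_eq_exp_mul, two_mul_cos_eq_exp_mul, mul_div_mul_left _ _ (exp_ne_zero _),
    ← mul_div_assoc, mul_div_mul_left _ _ I_ne_zero]

theorem one_add_exp_two_mul_I_ne_zero {z : ℂ} (hz : cos z ≠ 0) : 1 + exp (2 * z * I) ≠ 0 :=
  fun h ↦ hz (by simpa [h] using two_mul_cos_eq_exp_mul z)

theorem sub_tan_eq_exp_div {z : ℂ} (hz : cos z ≠ 0) (x : ℂ) :
    x - tan z = ((x - I) + exp (2 * z * I) * (x + I)) / (1 + exp (2 * z * I)) := by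
  have hw := one_add_exp_two_mul_I_ne_zero hz
  rw [tan_eq_exp_div, eq_div_iff hw, sub_mul, div_mul_cancel₀ _ hw]
  ring

theorem exp_two_mul_add_mul_pi_div_mul_I (γ : ℝ) (k d : ℕ) (hd : d ≠ 0) :
    exp (2 * ↑(γ + k * π / d) * I) = exp (2 * π * I / d) ^ k * exp (2 * γ * I) := by
  rw [← exp_nat_mul, ← exp_add]
  push_cast
  field_simp
  ring_nf

theorem prod_range_add_exp_mul (γ : ℝ) {d : ℕ} (hd : 0 < d) (a b : ℂ) :
    ∏ k ∈ range d, (a + exp (2 * ↑(γ + k * π / d) * I) * b) =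
      a ^ d - exp (2 * ↑(d * π / 2 + d * γ) * I) * b ^ d := by
  have hneg : -exp (2 * γ * I) = exp (π * I + 2 * γ * I) := by
    rw [exp_add, exp_pi_mul_I, neg_one_mul]
  simp_rw [exp_two_mul_add_mul_pi_div_mul_I γ _ d hd.ne', mul_assoc (_ ^ _),
    (isPrimitiveRoot_exp d hd.ne').prod_range_add_pow_mul hd, ← neg_mul, mul_pow, hneg,
    ← exp_nat_mul]
  push_cast
  ring_nf

end Complex

theorem prod_linear_tan_identity_general (d : ℕ) (γ : ℝ)
    (h2 : ∀ k < d, Real.cos (γ + k * π / d) ≠ 0) (x : ℂ) :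
    ∏ k ∈ Finset.range d, (x - (Real.tan (γ + k * π / d) : ℂ)) =
      (1 / 2) * ((1 - Complex.I * (Real.cot (d * π / 2 + d * γ) : ℂ)) * (x + Complex.I) ^ d +
        (1 + Complex.I * (Real.cot (d * π / 2 + d * γ) : ℂ)) * (x - Complex.I) ^ d) := by
  rcases Nat.eq_zero_or_pos d with rfl | hd
  · norm_num
  have hcos (k : ℕ) (hk : k ∈ range d) : Complex.cos ↑(γ + k * π / d) ≠ 0 := by
    exact_mod_cast h2 k (mem_range.mp hk)
  have hden : ∏ k ∈ range d, (1 + Complex.exp (2 * ↑(γ + k * π / d) * Complex.I)) =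
      1 - Complex.exp (2 * ↑(d * π / 2 + d * γ) * Complex.I) := by
    simpa using Complex.prod_range_add_exp_mul γ hd 1 1
  have hden_ne : 1 - Complex.exp (2 * ↑(d * π / 2 + d * γ) * Complex.I) ≠ 0 :=
    hden ▸ prod_ne_zero_iff.mpr fun k hk ↦ Complex.one_add_exp_two_mul_I_ne_zero (hcos k hk)
  rw [prod_congr rfl fun k hk ↦ by rw [Complex.ofReal_tan, Complex.sub_tan_eq_exp_div (hcos k hk)],
    prod_div_distrib, Complex.prod_range_add_exp_mul γ hd, hden, Complex.ofReal_cot,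
    Complex.I_mul_cot_eq_exp_div]
  generalize Complex.exp (2 * ↑(d * π / 2 + d * γ) * Complex.I) = W at hden_ne ⊢
  field_simp
  ring

theorem prod_linear_tan_identity (d : ℕ) (hd : 2 ≤ d) (γ : ℝ)
    (h1 : Real.sin (d * π / 2 + d * γ) ≠ 0)
    (h2 : ∀ k < d, Real.cos (γ + k * π / d) ≠ 0) (x : ℂ) :
    ∏ k ∈ Finset.range d, (x - (Real.tan (γ + k * π / d) : ℂ)) =
      (1 / 2) * ((1 - Complex.I * (Real.cot (d * π / 2 + d * γ) : ℂ)) * (x + Complex.I) ^ d +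
        (1 + Complex.I * (Real.cot (d * π / 2 + d * γ) : ℂ)) * (x - Complex.I) ^ d) :=
  prod_linear_tan_identity_general d γ h2 x
end

section
/- For d ≥ 2 and γ ∈ ℝ with all terms defined, ∑_{k=0}^{d−1} tan(γ + kπ/d) = −d·cot(dπ/2 + dγ). -/
/-!
With `x = exp (2iz)` and `ζ = exp (2πi/d)` one has `cot (z + kπ/d) = i - 2i / (1 - x ζ^k)`.
Expanding `1 / (1 - x ζ^k) = (∑_{j<d} x^j ζ^{jk}) / (1 - x^d)` and using that `∑ₖ ζ^{jk}` vanishes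
for `0 < j < d` gives `∑ₖ 1 / (1 - x ζ^k) = d / (1 - x^d)`, hence `∑ₖ cot (z + kπ/d) = d cot (dz)`.
The tangent sum is this identity at `z = γ + π/2`, since `tan y = -cot (y + π/2)`.
-/

open Real Finset

namespace IsPrimitiveRoot

theorem mul_pow_pow_eq {M : Type*} [CommMonoid M] {ζ : M} {d : ℕ} (hζ : IsPrimitiveRoot ζ d)
    (x : M) (k : ℕ) : (x * ζ ^ k) ^ d = x ^ d := by
  rw [mul_pow, ← pow_mul, mul_comm k, pow_mul, hζ.pow_eq_one, one_pow, mul_one]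

theorem sum_range_pow_pow_eq_zero {R : Type*} [CommRing R] [IsDomain R] {ζ : R} {d : ℕ}
    (hζ : IsPrimitiveRoot ζ d) {j : ℕ} (hj0 : j ≠ 0) (hjd : j < d) :
    ∑ k ∈ range d, (ζ ^ j) ^ k = 0 := by
  refine eq_zero_of_ne_zero_of_mul_left_eq_zero
    (sub_ne_zero_of_ne (hζ.pow_ne_one_of_pos_of_lt hj0 hjd).symm) ?_
  rw [mul_neg_geom_sum, ← pow_mul, mul_comm, pow_mul, hζ.pow_eq_one, one_pow, sub_self]

theorem sum_inv_one_sub_mul_pow {K : Type*} [Field K] {ζ : K} {d : ℕ}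
    (hζ : IsPrimitiveRoot ζ d) {x : K} (hx : x ^ d ≠ 1) :
    ∑ k ∈ range d, (1 - x * ζ ^ k)⁻¹ = d / (1 - x ^ d) := by
  have hd : 0 < d := Nat.pos_of_ne_zero fun h => hx (h ▸ pow_zero x)
  have hx' : 1 - x ^ d ≠ 0 := sub_ne_zero.2 hx.symm
  have geom (k : ℕ) :
      (1 - x * ζ ^ k)⁻¹ = (∑ j ∈ range d, x ^ j * (ζ ^ j) ^ k) / (1 - x ^ d) := by
    have h := geom_sum_mul_neg (x * ζ ^ k) d
    rw [hζ.mul_pow_pow_eq] at h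
    have hterm (j : ℕ) : x ^ j * (ζ ^ j) ^ k = (x * ζ ^ k) ^ j := by ring
    simp_rw [hterm]
    rw [← h, div_mul_cancel_left₀ (left_ne_zero_of_mul (h ▸ hx'))]
  calc ∑ k ∈ range d, (1 - x * ζ ^ k)⁻¹
      = (∑ j ∈ range d, x ^ j * ∑ k ∈ range d, (ζ ^ j) ^ k) / (1 - x ^ d) := by
        simp_rw [geom, ← sum_div, mul_sum]
        rw [sum_comm]
    _ = d / (1 - x ^ d) := by
        rw [sum_eq_single_of_mem 0 (mem_range.2 hd) fun j hj hj0 =>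
          by rw [hζ.sum_range_pow_pow_eq_zero hj0 (mem_range.1 hj), mul_zero]]
        simp

end IsPrimitiveRoot

namespace Complex

theorem exp_two_mul_I_mul_ne_one {z : ℂ} (h : sin z ≠ 0) : exp (2 * I * z) ≠ 1 := by
  rw [Ne, exp_eq_one_iff]
  rintro ⟨n, hn⟩
  refine h (sin_eq_zero_iff.2 ⟨n, mul_left_cancel₀ (by simp : (2 * I : ℂ) ≠ 0) ?_⟩)
  rw [hn]
  ring

theorem cot_eq_I_sub_mul_inv {z : ℂ} (h : exp (2 * I * z) ≠ 1) :
    cot z = I - 2 * I * (1 - exp (2 * I * z))⁻¹ := by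
  have h' : 1 - exp (2 * I * z) ≠ 0 := sub_ne_zero.2 h.symm
  rw [cot_eq_exp_ratio]
  field_simp
  linear_combination (1 + exp (2 * I * z)) * I_sq

theorem sum_cot_add_nat_mul_pi_div (d : ℕ) {z : ℂ} (h : sin (d * z) ≠ 0) :
    ∑ k ∈ range d, cot (z + k * π / d) = d * cot (d * z) := by
  rcases d.eq_zero_or_pos with rfl | hd
  · simp
  set x := exp (2 * I * z)
  set ζ := exp (2 * π * I / d)
  have hζ : IsPrimitiveRoot ζ d := isPrimitiveRoot_exp d hd.ne'
  have hxd : exp (2 * I * (d * z)) = x ^ d := by rw [← exp_nat_mul]; ring_nf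
  have hx : x ^ d ≠ 1 := hxd ▸ exp_two_mul_I_mul_ne_one h
  have hshift (k : ℕ) : exp (2 * I * (z + k * π / d)) = x * ζ ^ k := by
    rw [← exp_nat_mul, ← exp_add]
    field_simp
  calc ∑ k ∈ range d, cot (z + k * π / d)
      = ∑ k ∈ range d, (I - 2 * I * (1 - x * ζ ^ k)⁻¹) := by
        refine sum_congr rfl fun k _ => ?_
        have hk : exp (2 * I * (z + k * π / d)) ≠ 1 := by
          rw [hshift]
          exact fun h1 => hx (by rw [← hζ.mul_pow_pow_eq x k, h1, one_pow])
        rw [cot_eq_I_sub_mul_inv hk, hshift]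
    _ = d * (I - 2 * I * (1 - x ^ d)⁻¹) := by
        rw [sum_sub_distrib, ← mul_sum, hζ.sum_inv_one_sub_mul_pow hx]
        simp only [sum_const, card_range, nsmul_eq_mul]
        ring
    _ = d * cot (d * z) := by
        rw [cot_eq_I_sub_mul_inv (hxd ▸ hx), hxd]

end Complex

namespace Real

theorem sum_cot_add_nat_mul_pi_div (d : ℕ) {x : ℝ} (h : sin (d * x) ≠ 0) :
    ∑ k ∈ range d, cot (x + k * π / d) = d * cot (d * x) := by
  have hC : Complex.sin (d * x) ≠ 0 := by exact_mod_cast h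
  exact_mod_cast Complex.sum_cot_add_nat_mul_pi_div d hC

-- Where `cos x = 0` both sides take the junk value `0`.
theorem tan_eq_neg_cot_add_pi_div_two (x : ℝ) : tan x = -cot (x + π / 2) := by
  rw [tan_eq_sin_div_cos, cot_eq_cos_div_sin, cos_add_pi_div_two, sin_add_pi_div_two, neg_div,
    neg_neg]

end Real

theorem sum_tan_eq_general (d : ℕ) (γ : ℝ)
    (h1 : Real.sin (d * π / 2 + d * γ) ≠ 0) :
    ∑ k ∈ Finset.range d, Real.tan (γ + k * π / d) =
      -d * Real.cot (d * π / 2 + d * γ) := by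
  have hshift : (d : ℝ) * (γ + π / 2) = d * π / 2 + d * γ := by ring
  calc ∑ k ∈ range d, tan (γ + k * π / d)
      = -∑ k ∈ range d, cot (γ + π / 2 + k * π / d) := by
        rw [← sum_neg_distrib]
        refine sum_congr rfl fun k _ => ?_
        rw [tan_eq_neg_cot_add_pi_div_two, add_right_comm]
    _ = -d * cot (d * π / 2 + d * γ) := by
        rw [sum_cot_add_nat_mul_pi_div d (hshift ▸ h1), hshift, neg_mul]

theorem sum_tan_eq (d : ℕ) (hd : 2 ≤ d) (γ : ℝ)
    (h1 : Real.sin (d * π / 2 + d * γ) ≠ 0)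
    (h2 : ∀ k < d, Real.cos (γ + k * π / d) ≠ 0) :
    ∑ k ∈ Finset.range d, Real.tan (γ + k * π / d) =
      -d * Real.cot (d * π / 2 + d * γ) :=
  sum_tan_eq_general d γ h1
end

section
/- If f(x) = x^d + c_{d−1}x^{d−1} + … + c₀ = ∏_{k=1}^d (x − x_k) is a monic real polynomial with d distinct real roots that is a critical point of the function ∑_{j<k} log(x_j − x_k)² subject to the constraint ∑_k ½ log(1 + x_k²) = log m (via Lagrange multiplier λ), then f satisfies the differential equation (x²+1)f″(x) − λx f′(x) + d(λ − d + 1)f(x) = 0. -/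
/-!
Let `f = ∏ (X - x_k)` and `g = (X² + 1) f'' - λ X f' + d (λ - d + 1) f`. Since
`f = (X - x_k) q_k` with `q_k = ∏_{j ≠ k} (X - x_j)`, one has `f'(x_k) = q_k(x_k)` and
`f''(x_k) = 2 q_k'(x_k) = 2 f'(x_k) ∑_{j ≠ k} 1/(x_k - x_j)`, so the Lagrange condition says
exactly that `g(x_k) = 0` for every `k`. On the other hand the coefficient of `X^n` in `g` is
`(n - d)(n + d - 1 - λ) f_n + (n + 2)(n + 1) f_{n+2}`, which vanishes for `n ≥ d`; hence
`deg g < d`, and a polynomial of degree `< d` with `d` distinct roots is zero.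
-/

open Polynomial Finset

section CommRing

variable {R : Type*} [CommRing R]

theorem coeff_X_mul_derivative (p : R[X]) (n : ℕ) :
    (X * derivative p).coeff n = n * p.coeff n := by
  cases n with
  | zero => simp
  | succ n => rw [coeff_X_mul, coeff_derivative, mul_comm]; push_cast; rfl

theorem coeff_X_sq_mul_derivative_derivative (p : R[X]) (n : ℕ) :
    (X ^ 2 * derivative (derivative p)).coeff n = n * (n - 1) * p.coeff n := by
  have euler : X ^ 2 * derivative (derivative p) =
      X * derivative (X * derivative p) - X * derivative p := by
    rw [derivative_mul, derivative_X]; ring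
  rw [euler, coeff_sub, coeff_X_mul_derivative, coeff_X_mul_derivative]
  ring

-- `(X² + 1) p'' - a X p' + b p` is an operator of hypergeometric type in the sense of
-- Nikiforov–Uvarov: quadratic leading coefficient, linear first-order coefficient.
theorem coeff_hypergeometric (p : R[X]) (a b : R) (n : ℕ) :
    ((X ^ 2 + 1) * derivative (derivative p) - C a * X * derivative p + C b * p).coeff n =
      (n * (n - 1) - a * n + b) * p.coeff n + p.coeff (n + 2) * (n + 2) * (n + 1) := by
  rw [coeff_add, coeff_sub, add_mul, one_mul, coeff_add, coeff_X_sq_mul_derivative_derivative,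
    mul_assoc (C a), coeff_C_mul, coeff_X_mul_derivative, coeff_C_mul, coeff_derivative,
    coeff_derivative]
  push_cast
  ring

theorem degree_hypergeometric_lt {p : R[X]} {d : ℕ} (hp : p.natDegree ≤ d) (a : R) :
    ((X ^ 2 + 1) * derivative (derivative p) - C a * X * derivative p +
      C ((d : R) * (a - d + 1)) * p).degree < (d : WithBot ℕ) := by
  rw [degree_lt_iff_coeff_zero]
  intro n hn
  rw [coeff_hypergeometric, coeff_eq_zero_of_natDegree_lt (n := n + 2) (by omega)]
  rcases hn.eq_or_lt with rfl | hlt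
  · ring
  · rw [coeff_eq_zero_of_natDegree_lt (hp.trans_lt hlt)]
    ring

end CommRing

section Field

variable {K : Type*} [Field K]

theorem eval_derivative_X_sub_C_mul (a : K) (q : K[X]) :
    eval a (derivative ((X - C a) * q)) = eval a q := by
  simp [derivative_mul]

theorem eval_derivative_derivative_X_sub_C_mul (a : K) (q : K[X]) :
    eval a (derivative (derivative ((X - C a) * q))) = 2 * eval a (derivative q) := by
  simp only [derivative_mul, derivative_add, derivative_sub, derivative_X, derivative_C, sub_zero,
    one_mul, eval_add, eval_mul, eval_sub, eval_X, eval_C, sub_self, zero_mul, add_zero]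
  ring

theorem eval_derivative_prod_X_sub_C {ι : Type*} (s : Finset ι) (v : ι → K) {r : K}
    (hr : ∀ i ∈ s, r ≠ v i) :
    eval r (derivative (∏ i ∈ s, (X - C (v i)))) =
      eval r (∏ i ∈ s, (X - C (v i))) * ∑ i ∈ s, (r - v i)⁻¹ := by
  classical
  rw [derivative_prod_finset, eval_finsetSum, Finset.mul_sum]
  refine Finset.sum_congr rfl fun i hi => ?_
  have hri : r - v i ≠ 0 := sub_ne_zero.mpr (hr i hi)
  rw [← Finset.mul_prod_erase s _ hi]
  simp only [derivative_X_sub_C, mul_one, eval_prod, eval_sub, eval_X, eval_C, eval_mul]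
  field_simp

theorem eval_derivative_derivative_prod_X_sub_C {ι : Type*} [DecidableEq ι] {s : Finset ι}
    {v : ι → K} (hv : Set.InjOn v s) {k : ι} (hk : k ∈ s) :
    eval (v k) (derivative (derivative (∏ i ∈ s, (X - C (v i))))) =
      2 * eval (v k) (derivative (∏ i ∈ s, (X - C (v i)))) *
        ∑ i ∈ s.erase k, (v k - v i)⁻¹ := by
  have hne : ∀ i ∈ s.erase k, v k ≠ v i := fun i hi h =>
    (Finset.ne_of_mem_erase hi) (hv hk (Finset.mem_of_mem_erase hi) h).symm
  rw [← Finset.mul_prod_erase s _ hk, eval_derivative_derivative_X_sub_C_mul,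
    eval_derivative_X_sub_C_mul, eval_derivative_prod_X_sub_C _ _ hne, mul_assoc]

end Field

theorem critical_point_ode_general (d : ℕ) (x : Fin d → ℝ) (hx : Function.Injective x)
    (lam : ℝ)
    (hlag : ∀ k : Fin d, ∑ j ∈ Finset.univ.erase k, 2 / (x k - x j) =
      lam * x k / (x k ^ 2 + 1)) :
    (Polynomial.X ^ 2 + 1) * Polynomial.derivative
        (Polynomial.derivative (∏ k, (Polynomial.X - Polynomial.C (x k)))) -
      Polynomial.C lam * Polynomial.X *
        Polynomial.derivative (∏ k, (Polynomial.X - Polynomial.C (x k))) +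
      Polynomial.C ((d : ℝ) * (lam - d + 1)) * ∏ k, (Polynomial.X - Polynomial.C (x k)) = 0 := by
  set f : ℝ[X] := ∏ k, (X - C (x k))
  have hdeg : f.natDegree ≤ d := by simp [f]
  refine eq_zero_of_degree_lt_of_eval_index_eq_zero univ hx.injOn
    (by simpa using degree_hypergeometric_lt hdeg lam) fun k _ => ?_
  have hroot : f.eval (x k) = 0 := by simp [f, eval_prod, Finset.prod_eq_zero (mem_univ k)]
  have hlag_k : (x k ^ 2 + 1) * (2 * ∑ j ∈ univ.erase k, (x k - x j)⁻¹) = lam * x k := by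
    have : x k ^ 2 + 1 ≠ 0 := by positivity
    rw [Finset.mul_sum, ← Finset.sum_congr rfl fun j _ => div_eq_mul_inv 2 (x k - x j), hlag k]
    field_simp
  simp only [eval_add, eval_sub, eval_mul, eval_pow, eval_X, eval_C, eval_one, hroot, mul_zero,
    add_zero]
  rw [eval_derivative_derivative_prod_X_sub_C hx.injOn (mem_univ k)]
  linear_combination eval (x k) (derivative f) * hlag_k

theorem critical_point_ode (d : ℕ) (hd : 2 ≤ d) (x : Fin d → ℝ) (hx : Function.Injective x)
    (lam : ℝ)
    (hlag : ∀ k : Fin d, ∑ j ∈ Finset.univ.erase k, 2 / (x k - x j) =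
      lam * x k / (x k ^ 2 + 1)) :
    (Polynomial.X ^ 2 + 1) * Polynomial.derivative
        (Polynomial.derivative (∏ k, (Polynomial.X - Polynomial.C (x k)))) -
      Polynomial.C lam * Polynomial.X *
        Polynomial.derivative (∏ k, (Polynomial.X - Polynomial.C (x k))) +
      Polynomial.C ((d : ℝ) * (lam - d + 1)) * ∏ k, (Polynomial.X - Polynomial.C (x k)) = 0 :=
  critical_point_ode_general d x hx lam hlag
end

section
/- Let d ≥ 2, a > 0, and D > 0 with D ≤ 2^(1−d) d^d and D ≥ 1, and set a₀ = 2^(−1+2/d) d^(−1/(d−1)) D^(1/(d(d−1))). Then the polynomial f(x) = ((x+a₀i)^d + (x−a₀i)^d)/2 is monic of degree d with d real roots, has discriminant D, and satisfies |f(a₀ i)| = 2 d^(−d/(d−1)) D^(1/(d−1)) ≤ 1. -/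
open Real Finset Polynomial

/-!
The roots are `x_k = a cot θ_k` with `θ_k = (2k+1)π/(2d)`. For the `d`-th roots `ω_k = e^{2iθ_k}`
of `-1` one has `x_k + ai = ω_k (x_k - ai)`, i.e. `(1 - ω_k)(z - x_k) = (z + ai) - ω_k (z - ai)`;
multiplying over `k` and using `u^d + v^d = ∏ (u - ω_k v)` (which also gives `∏ (1 - ω_k) = 2`)
yields `2 ∏ (z - x_k) = (z + ai)^d + (z - ai)^d`.

The discriminant is `±∏_k f'(x_k)`. At a root, `(x_k + c) f'(x_k) = d c (x_k - c)^{d-1}` for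
`c = ai`, and `∏ (x_k ± c)` are read off from `f(∓c)`; hence
`4^{d-1} ∏_{j<k} (x_j - x_k)^2 = d^d (2a)^{d(d-1)}`, which equals `4^{d-1} D` for `a = a₀`.
Finally `|f(a₀ i)| = (2a₀)^d / 2`, and its `(d-1)`-st power is `2^{d-1} D / d^d ≤ 1`.
-/

namespace Lemniscate

/-- `e^{(2k+1)πi/d}`, written as `ζ^k α` to match `X_pow_sub_C_eq_prod`. -/
noncomputable def negOneRoot (d k : ℕ) : ℂ :=
  Complex.exp (2 * π * Complex.I / d) ^ k * Complex.exp (π * Complex.I / d)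

theorem X_pow_add_one_eq_prod {d : ℕ} (hd : 0 < d) :
    (X ^ d + 1 : ℂ[X]) = ∏ k ∈ range d, (X - C (negOneRoot d k)) := by
  have hroot : Complex.exp (π * Complex.I / d) ^ d = -1 := by
    rw [← Complex.exp_nat_mul, mul_div_cancel₀ _ (by exact_mod_cast hd.ne'),
      Complex.exp_pi_mul_I]
  simpa [negOneRoot] using X_pow_sub_C_eq_prod (Complex.isPrimitiveRoot_exp d hd.ne') hd hroot

theorem prod_sub_negOneRoot_mul {d : ℕ} (hd : 0 < d) (u v : ℂ) :
    ∏ k ∈ range d, (u - negOneRoot d k * v) = u ^ d + v ^ d := by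
  rcases eq_or_ne v 0 with rfl | hv
  · simp [zero_pow hd.ne']
  have h := congrArg (eval (u / v)) (X_pow_add_one_eq_prod hd)
  simp only [eval_add, eval_pow, eval_X, eval_one, eval_prod, eval_sub, eval_C] at h
  calc ∏ k ∈ range d, (u - negOneRoot d k * v)
      = ∏ k ∈ range d, (v * (u / v - negOneRoot d k)) :=
        prod_congr rfl fun k _ => by field_simp
    _ = u ^ d + v ^ d := by
        rw [prod_mul_distrib, prod_const, card_range, ← h, div_pow]
        field_simp

theorem negOneRoot_eq_exp (d k : ℕ) :
    negOneRoot d k = Complex.exp (2 * ((2 * k + 1) * π / (2 * d)) * Complex.I) := by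
  rw [negOneRoot, ← Complex.exp_nat_mul, ← Complex.exp_add]
  congr 1
  field_simp

theorem ofReal_mul_cot_add_mul_I (a θ : ℝ) (hθ : sin θ ≠ 0) :
    ((a * cot θ : ℝ) : ℂ) + a * Complex.I =
      Complex.exp (2 * θ * Complex.I) * ((a * cot θ : ℝ) - a * Complex.I) := by
  have hs : Complex.sin θ ≠ 0 := by exact_mod_cast hθ
  have hexp :
      Complex.exp (2 * θ * Complex.I) = (Complex.cos θ + Complex.sin θ * Complex.I) ^ 2 := by
    rw [← Complex.exp_mul_I, ← Complex.exp_nat_mul]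
    push_cast
    ring_nf
  rw [hexp, cot_eq_cos_div_sin]
  push_cast
  field_simp
  linear_combination a * (Complex.cos θ + Complex.sin θ * Complex.I) *
    (Complex.sin θ ^ 2 * Complex.I_sq - Complex.cos_sq_add_sin_sq (θ : ℂ))

noncomputable def lemniscateRoot (a : ℝ) (d k : ℕ) : ℝ := a * cot ((2 * k + 1) * π / (2 * d))

theorem sin_odd_mul_pi_div_ne_zero {d k : ℕ} (hk : k < d) :
    sin ((2 * k + 1) * π / (2 * d)) ≠ 0 := by
  have hk' : (2 * k + 1 : ℝ) < 2 * d := by norm_cast; omega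
  have hd : (0 : ℝ) < 2 * d := by linarith
  refine (sin_pos_of_pos_of_lt_pi (by positivity) ?_).ne'
  rw [div_lt_iff₀ hd]
  nlinarith [pi_pos]

theorem lemniscateRoot_add_mul_I {d k : ℕ} (hk : k < d) (a : ℝ) :
    (lemniscateRoot a d k : ℂ) + a * Complex.I =
      negOneRoot d k * (lemniscateRoot a d k - a * Complex.I) := by
  rw [negOneRoot_eq_exp, lemniscateRoot]
  exact_mod_cast ofReal_mul_cot_add_mul_I a _ (sin_odd_mul_pi_div_ne_zero hk)

theorem prod_sub_lemniscateRoot {d : ℕ} (hd : 0 < d) (a : ℝ) (z : ℂ) :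
    ∏ k : Fin d, (z - lemniscateRoot a d k) =
      ((z + a * Complex.I) ^ d + (z - a * Complex.I) ^ d) / 2 := by
  have hfactor (k : Fin d) : (1 - negOneRoot d k) * (z - lemniscateRoot a d k) =
      (z + a * Complex.I) - negOneRoot d k * (z - a * Complex.I) := by
    linear_combination -lemniscateRoot_add_mul_I k.2 a
  have htwo : ∏ k : Fin d, (1 - negOneRoot d k) = 2 := by
    rw [Fin.prod_univ_eq_prod_range (fun k => 1 - negOneRoot d k), ← one_add_one_eq_two]
    simpa using prod_sub_negOneRoot_mul hd 1 1
  rw [eq_div_iff two_ne_zero, ← htwo, mul_comm, ← prod_mul_distrib,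
    prod_congr rfl fun k _ => hfactor k,
    Fin.prod_univ_eq_prod_range fun k => (z + a * Complex.I) - negOneRoot d k * (z - a * Complex.I),
    prod_sub_negOneRoot_mul hd]

section Discriminant

variable {ι R : Type*} [Fintype ι] [CommRing R]

theorem prod_erase_sub_eq_eval_derivative [DecidableEq ι] (x : ι → R) (i : ι) :
    ∏ j ∈ univ.erase i, (x i - x j) = eval (x i) (derivative (∏ j, (X - C (x j)))) := by
  rw [derivative_prod_finset, eval_finsetSum, sum_eq_single i]
  · simp [eval_prod]
  · intro j _ hji
    simp only [derivative_X_sub_C, mul_one, eval_prod, eval_sub, eval_X, eval_C]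
    exact prod_eq_zero (mem_erase.mpr ⟨Ne.symm hji, mem_univ i⟩) (sub_self _)
  · simp

theorem prod_lt_sub_sq [LinearOrder ι] (x : ι → R) :
    ∏ p ∈ univ.filter (fun p : ι × ι => p.1 < p.2), (x p.1 - x p.2) ^ 2 =
      (-1) ^ (Fintype.card ι).choose 2 * ∏ i, ∏ j ∈ univ.erase i, (x i - x j) := by
  set L := univ.filter (fun p : ι × ι => p.1 < p.2)
  set G := univ.filter (fun p : ι × ι => p.2 < p.1)
  have hcard : #L = (Fintype.card ι).choose 2 := by
    have h := card_product_filter_lt (s := (univ : Finset ι))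
    rwa [univ_product_univ] at h
  have hoffDiag : ∏ i, ∏ j ∈ univ.erase i, (x i - x j) =
      (∏ p ∈ L, (x p.1 - x p.2)) * ∏ p ∈ G, (x p.1 - x p.2) := by
    rw [← prod_union (disjoint_filter.mpr fun p _ h => (lt_asymm h).elim)]
    calc ∏ i, ∏ j ∈ univ.erase i, (x i - x j)
        = ∏ p ∈ univ.filter (fun p : ι × ι => p.1 ≠ p.2), (x p.1 - x p.2) := by
          rw [← univ_product_univ, prod_filter, prod_product]
          refine prod_congr rfl fun i _ => ?_
          rw [← prod_filter]
          exact prod_congr (filter_ne univ i).symm fun _ _ => rfl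
      _ = ∏ p ∈ L ∪ G, (x p.1 - x p.2) := by
          congr 1
          ext p
          simp [L, G]
  have hswap : ∏ p ∈ G, (x p.1 - x p.2) = ∏ p ∈ L, -(x p.1 - x p.2) :=
    prod_nbij' Prod.swap Prod.swap (by simp [L, G]) (by simp [L, G]) (by simp) (by simp)
      (by simp)
  have hsign : ((-1 : R) ^ (Fintype.card ι).choose 2) ^ 2 = 1 := by
    rw [← pow_mul, pow_mul', neg_one_sq, one_pow]
  rw [hoffDiag, hswap, prod_neg, hcard, prod_pow]
  linear_combination (-(∏ p ∈ L, (x p.1 - x p.2)) ^ 2) * hsign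

theorem four_pow_mul_prod_erase_sub {K : Type*} [Field K] [CharZero K] {d : ℕ} (hd : 0 < d)
    {c : K} (hc : c ≠ 0) (x : Fin d → K)
    (hx : ∀ z, ∏ i, (z - x i) = ((z + c) ^ d + (z - c) ^ d) / 2) :
    4 ^ (d - 1) * ∏ i, ∏ j ∈ univ.erase i, (x i - x j) =
      d ^ d * (-2 * c) ^ (d * (d - 1)) := by
  have hpoly : ∏ j, (X - C (x j)) = C (1 / 2 : K) * ((X + C c) ^ d + (X - C c) ^ d) :=
    Polynomial.funext fun z => by
      simp only [eval_prod, eval_sub, eval_X, eval_C, hx, eval_mul, eval_add, eval_pow]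
      ring
  have hderiv (z : K) : eval z (derivative (∏ j, (X - C (x j)))) =
      d / 2 * ((z + c) ^ (d - 1) + (z - c) ^ (d - 1)) := by
    rw [hpoly]
    simp only [derivative_mul, derivative_C, zero_mul, derivative_add, derivative_X_add_C_pow,
      map_natCast, derivative_X_sub_C_pow, zero_add, eval_mul, eval_C, eval_add, eval_natCast,
      eval_pow, eval_X, eval_sub]
    ring
  have hroot (i : Fin d) : (x i + c) ^ d + (x i - c) ^ d = 0 := by
    have h := hx (x i)
    rw [prod_eq_zero (mem_univ i) (sub_self _)] at h
    linear_combination -2 * h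
  have hvalue (i : Fin d) :
      (x i + c) * ∏ j ∈ univ.erase i, (x i - x j) = d * c * (x i - c) ^ (d - 1) := by
    rw [prod_erase_sub_eq_eval_derivative, hderiv]
    obtain ⟨n, rfl⟩ := Nat.exists_eq_add_one_of_ne_zero hd.ne'
    simp only [add_tsub_cancel_right]
    linear_combination (↑(n + 1) / 2 : K) * hroot i
  have hplus : ∏ i, (x i + c) = (2 * c) ^ d / 2 := by
    have h := hx (-c)
    rw [neg_add_cancel, zero_pow hd.ne', zero_add] at h
    calc ∏ i, (x i + c) = ∏ i, -(-c - x i) := prod_congr rfl fun _ _ => by ring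
      _ = (2 * c) ^ d / 2 := by
          rw [prod_neg, card_univ, Fintype.card_fin, h, ← mul_div_assoc, ← mul_pow]
          ring_nf
  have hminus : ∏ i, (x i - c) = (-2 * c) ^ d / 2 := by
    have h := hx c
    rw [sub_self, zero_pow hd.ne', add_zero] at h
    calc ∏ i, (x i - c) = ∏ i, -(c - x i) := prod_congr rfl fun _ _ => by ring
      _ = (-2 * c) ^ d / 2 := by
          rw [prod_neg, card_univ, Fintype.card_fin, h, ← mul_div_assoc, ← mul_pow]
          ring_nf
  have h := congrArg (fun f => ∏ i, f i) (funext hvalue)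
  simp only [prod_mul_distrib, prod_pow, prod_const, card_univ, Fintype.card_fin, hplus,
    hminus] at h
  obtain ⟨n, rfl⟩ := Nat.exists_eq_add_one_of_ne_zero hd.ne'
  have h2c : (2 * c) ^ (n + 1) / 2 ≠ 0 := by simp [hc]
  refine mul_left_cancel₀ h2c ?_
  simp only [add_tsub_cancel_right, neg_mul (2 : K), neg_pow (2 * c)] at h ⊢
  rw [show (4 : K) = 2 ^ 2 by norm_num, ← pow_mul]
  linear_combination (2 : K) ^ (2 * n) * h

end Discriminant

theorem four_pow_mul_discr_lemniscateRoot {d : ℕ} (hd : 0 < d) {a : ℝ} (ha : a ≠ 0) :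
    (4 : ℝ) ^ (d - 1) * ∏ p ∈ univ.filter (fun p : Fin d × Fin d => p.1 < p.2),
        (lemniscateRoot a d p.1 - lemniscateRoot a d p.2) ^ 2 =
      (d : ℝ) ^ d * (2 * a) ^ (d * (d - 1)) := by
  set x : Fin d → ℂ := fun k => lemniscateRoot a d k
  have hprod := four_pow_mul_prod_erase_sub hd (c := a * Complex.I) (by simp [ha]) x
    (fun z => prod_sub_lemniscateRoot hd a z)
  have hdiscr := prod_lt_sub_sq x
  have hN : d * (d - 1) = 2 * d.choose 2 := by
    rw [Nat.choose_two_right, Nat.mul_div_cancel' (Nat.even_mul_pred_self d).two_dvd]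
  set N := d.choose 2
  have hsq : (-2 * (a * Complex.I)) ^ 2 = -(2 * a) ^ 2 := by
    linear_combination (4 * (a : ℂ) ^ 2) * Complex.I_sq
  have hsign : ((-1 : ℂ) ^ N) ^ 2 = 1 := by
    rw [← pow_mul, pow_mul', neg_one_sq, one_pow]
  rw [Fintype.card_fin] at hdiscr
  rw [hN, pow_mul, hsq, neg_pow] at hprod
  suffices h : (4 : ℂ) ^ (d - 1) * ∏ p ∈ univ.filter (fun p : Fin d × Fin d => p.1 < p.2),
      (x p.1 - x p.2) ^ 2 = (d : ℂ) ^ d * ((2 * a : ℂ) ^ 2) ^ N by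
    rw [hN, pow_mul]
    simp only [x] at h
    exact_mod_cast h
  rw [hdiscr]
  linear_combination (-1 : ℂ) ^ N * hprod + (d : ℂ) ^ d * ((2 * a : ℂ) ^ 2) ^ N * hsign

section Constants

variable {d : ℕ} {D : ℝ}

noncomputable def peakValue (d : ℕ) (D : ℝ) : ℝ :=
  2 * (d : ℝ) ^ (-(d : ℝ) / (d - 1)) * D ^ ((1 : ℝ) / (d - 1))

theorem natCast_pow_mul_peakValue_pow_pred (hd : 2 ≤ d) (hD : 0 ≤ D) :
    (d : ℝ) ^ d * peakValue d D ^ (d - 1) = 2 ^ (d - 1) * D := by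
  have hd1 : ((d - 1 : ℕ) : ℝ) = d - 1 := by rw [Nat.cast_sub (by omega), Nat.cast_one]
  have hd1' : (d : ℝ) - 1 ≠ 0 := by rw [← hd1]; exact_mod_cast (by omega : d - 1 ≠ 0)
  have hd0 : (0 : ℝ) < d := by positivity
  rw [peakValue, mul_pow, mul_pow, ← rpow_mul_natCast hd0.le, ← rpow_mul_natCast hD, hd1,
    div_mul_cancel₀ _ hd1', one_div_mul_cancel hd1', rpow_one, rpow_neg hd0.le, rpow_natCast]
  field_simp

theorem peakValue_le_one (hd : 2 ≤ d) (hD : 0 ≤ D) (hD2 : D ≤ 2 ^ ((1 : ℤ) - d) * d ^ d) :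
    peakValue d D ≤ 1 := by
  rw [show (1 : ℤ) - d = -((d - 1 : ℕ) : ℤ) by omega, zpow_neg, zpow_natCast,
    le_inv_mul_iff₀ (by positivity), ← natCast_pow_mul_peakValue_pow_pred hd hD] at hD2
  have hpow : peakValue d D ^ (d - 1) ≤ 1 :=
    le_of_mul_le_mul_left (by rwa [mul_one]) (by positivity : (0 : ℝ) < d ^ d)
  exact (pow_le_one_iff_of_nonneg (by unfold peakValue; positivity) (by omega)).mp hpow

theorem two_mul_pow_eq_two_mul_peakValue (hd : 2 ≤ d) (hD : 0 ≤ D) {a₀ : ℝ}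
    (ha₀ : a₀ = 2 ^ (-1 + 2 / (d : ℝ)) * (d : ℝ) ^ (-(1 : ℝ) / (d - 1)) *
      D ^ ((1 : ℝ) / (d * (d - 1)))) :
    (2 * a₀) ^ d = 2 * peakValue d D := by
  have hd0 : (d : ℝ) ≠ 0 := by exact_mod_cast (by omega : d ≠ 0)
  have hd1 : (d : ℝ) - 1 ≠ 0 := by
    have : (2 : ℝ) ≤ d := by exact_mod_cast hd
    linarith
  have htwo : 2 * (2 : ℝ) ^ (-1 + 2 / (d : ℝ)) = 2 ^ (2 / (d : ℝ)) := by
    rw [← rpow_one_add' zero_le_two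
      (by rw [add_neg_cancel_left]; exact div_ne_zero two_ne_zero hd0), add_neg_cancel_left]
  rw [ha₀, ← mul_assoc, ← mul_assoc, htwo, mul_pow, mul_pow, ← rpow_mul_natCast zero_le_two,
    ← rpow_mul_natCast (Nat.cast_nonneg d), ← rpow_mul_natCast hD, div_mul_cancel₀ _ hd0,
    rpow_two, show -1 / ((d : ℝ) - 1) * d = -d / (d - 1) by ring,
    show 1 / ((d : ℝ) * (d - 1)) * d = 1 / (d - 1) by field_simp, peakValue]
  ring

end Constants

end Lemniscate

open Lemniscate

theorem lemniscate_poly (d : ℕ) (hd : 2 ≤ d) (D : ℝ) (hD1 : 1 ≤ D)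
    (hD2 : D ≤ 2 ^ ((1 : ℤ) - d) * d ^ d)
    (a₀ : ℝ)
    (ha₀ : a₀ = 2 ^ (-1 + 2 / (d : ℝ)) * (d : ℝ) ^ (-(1 : ℝ) / (d - 1)) *
      D ^ ((1 : ℝ) / (d * (d - 1)))) :
    ∃ x : Fin d → ℝ,
      (∀ z : ℂ,
        ((z + (a₀ : ℂ) * Complex.I) ^ d + (z - (a₀ : ℂ) * Complex.I) ^ d) / 2 =
          ∏ k, (z - (x k : ℂ))) ∧
      (∏ p ∈ Finset.univ.filter (fun p : Fin d × Fin d => p.1 < p.2),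
          (x p.1 - x p.2) ^ 2 = D) ∧
      ‖(((a₀ : ℂ) * Complex.I + (a₀ : ℂ) * Complex.I) ^ d +
          ((a₀ : ℂ) * Complex.I - (a₀ : ℂ) * Complex.I) ^ d) / 2‖ =
        2 * (d : ℝ) ^ (-(d : ℝ) / (d - 1)) * D ^ ((1 : ℝ) / (d - 1)) ∧
      2 * (d : ℝ) ^ (-(d : ℝ) / (d - 1)) * D ^ ((1 : ℝ) / (d - 1)) ≤ 1 := by
  have hd0 : 0 < d := by omega
  have hD : 0 ≤ D := by linarith
  have ha₀pos : 0 < a₀ := by rw [ha₀]; positivity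
  have hpow := two_mul_pow_eq_two_mul_peakValue hd hD ha₀
  have hfour : (4 : ℝ) ^ (d - 1) = 2 ^ (d - 1) * 2 ^ (d - 1) := by rw [← mul_pow]; norm_num
  refine ⟨fun k => lemniscateRoot a₀ d k, fun z => (prod_sub_lemniscateRoot hd0 a₀ z).symm,
    ?_, ?_, peakValue_le_one hd hD hD2⟩
  · have h := four_pow_mul_discr_lemniscateRoot hd0 ha₀pos.ne'
    rw [pow_mul, hpow, mul_pow, hfour] at h
    refine mul_left_cancel₀ (by positivity : (4 : ℝ) ^ (d - 1) ≠ 0) ?_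
    rw [hfour]
    linear_combination h + 2 ^ (d - 1) * natCast_pow_mul_peakValue_pow_pred hd hD
  · rw [sub_self, zero_pow hd0.ne', add_zero, ← two_mul, ← mul_assoc, mul_pow, norm_div,
      norm_mul, norm_pow, norm_pow, Complex.norm_I, one_pow, mul_one, norm_mul,
      Complex.norm_ofNat, Complex.norm_real, Real.norm_of_nonneg ha₀pos.le, hpow, peakValue]
    ring
end

section
/- Let a > 0, d ≥ 2, and let x₁, …, x_d be real points with counting measure τ_d = (1/d)∑ δ_{x_k}. If the potential U^{τ_d}(ai) = −(1/d)∑_k log|ai − x_k| equals v, then the discrete energy I[τ_d] = −(1/(d(d−1)))∑_{j≠k} log|x_j − x_k| satisfies I[τ_d] ≥ 2v + log(2a) − (log d)/(d−1). -/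
/-!
The Cayley transform `w = (t - a i) / (t + a i)` maps the real points `x_k` to points `w_k` of the
unit circle, with `2a |x_j - x_k| = |ai - x_j| |ai - x_k| |w_j - w_k|`. Taking logarithms and
summing over `j ≠ k`, the energy of the `x_k` splits into twice the potential at `ai`, the constant
`log (2a)` and the logarithmic energy of the `w_k`. The latter is `log |det V|²` for the Vandermonde
matrix `V` of the `w_k`; its entries have modulus one, so `tr (V Vᴴ) = d²`, and AM-GM on the
eigenvalues of `V Vᴴ` gives `|det V|² ≤ d^d`.
-/

open Real Finset Matrix
open Complex (I)
open scoped ComplexOrder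

namespace Finset

variable {ι M : Type*} [CommMonoid M] (s : Finset ι)

@[to_additive]
theorem prod_offDiag_fst [DecidableEq ι] (f : ι → M) :
    ∏ p ∈ s.offDiag, f p.1 = (∏ i ∈ s, f i) ^ (#s - 1) := by
  rw [prod_finset_product' (f := fun i _ ↦ f i) _ s (fun i ↦ s.erase i) (by aesop), ← prod_pow]
  exact prod_congr rfl fun i hi ↦ by rw [prod_const, card_erase_of_mem hi]

@[to_additive]
theorem prod_offDiag_snd [DecidableEq ι] (f : ι → M) :
    ∏ p ∈ s.offDiag, f p.2 = (∏ i ∈ s, f i) ^ (#s - 1) := by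
  rw [← prod_offDiag_fst]
  exact prod_nbij' Prod.swap Prod.swap (by aesop) (by aesop) (by simp) (by simp) (by simp)

@[to_additive]
theorem prod_offDiag_eq_sq [LinearOrder ι] (f : ι → ι → M) (hf : ∀ i j, f i j = f j i) :
    ∏ p ∈ s.offDiag, f p.1 p.2 = (∏ i ∈ s, ∏ j ∈ s with i < j, f i j) ^ 2 := by
  have hlt : ∏ p ∈ s.offDiag with p.1 < p.2, f p.1 p.2 = ∏ i ∈ s, ∏ j ∈ s with i < j, f i j :=
    prod_finset_product' _ _ _ (by aesop)
  have hgt : ∏ p ∈ s.offDiag with ¬ p.1 < p.2, f p.1 p.2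
      = ∏ p ∈ s.offDiag with p.1 < p.2, f p.1 p.2 :=
    prod_nbij' Prod.swap Prod.swap (by grind) (by grind)
      (by simp) (by simp) (fun p _ ↦ hf _ _)
  rw [← prod_filter_mul_prod_filter_not _ (fun p ↦ p.1 < p.2), hgt, hlt, sq]

end Finset

theorem Real.prod_le_arith_mean_pow {ι : Type*} (s : Finset ι) (f : ι → ℝ)
    (hf : ∀ i ∈ s, 0 ≤ f i) : ∏ i ∈ s, f i ≤ ((∑ i ∈ s, f i) / #s) ^ #s := by
  rcases s.eq_empty_or_nonempty with rfl | hs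
  · simp
  have hcard : (#s : ℝ) ≠ 0 := by exact_mod_cast hs.card_pos.ne'
  have amgm := geom_mean_le_arith_mean_weighted s (fun _ ↦ (#s : ℝ)⁻¹) f
    (fun _ _ ↦ by positivity) (by simp [hcard]) hf
  rw [Real.finsetProd_rpow s f hf, ← Finset.mul_sum, inv_mul_eq_div] at amgm
  calc ∏ i ∈ s, f i = ((∏ i ∈ s, f i) ^ (#s : ℝ)⁻¹) ^ #s :=
        (rpow_inv_natCast_pow (prod_nonneg hf) (by exact_mod_cast hcard)).symm
    _ ≤ ((∑ i ∈ s, f i) / #s) ^ #s := by gcongr; exact rpow_nonneg (prod_nonneg hf) _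

theorem Matrix.norm_det_sq_le_s18 {𝕜 n : Type*} [RCLike 𝕜] [Fintype n] [DecidableEq n]
    (A : Matrix n n 𝕜) :
    ‖A.det‖ ^ 2 ≤ ((∑ i, ∑ j, ‖A i j‖ ^ 2) / Fintype.card n) ^ Fintype.card n := by
  have hAA := posSemidef_self_mul_conjTranspose A
  have hdet : ((‖A.det‖ ^ 2 : ℝ) : 𝕜) = ∏ i, (hAA.1.eigenvalues i : 𝕜) := by
    rw [← hAA.1.det_eq_prod_eigenvalues, det_mul, det_conjTranspose, RCLike.star_def,
      RCLike.mul_conj, RCLike.ofReal_pow]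
  have htrace : ((∑ i, ∑ j, ‖A i j‖ ^ 2 : ℝ) : 𝕜) = ∑ i, (hAA.1.eigenvalues i : 𝕜) := by
    rw [← hAA.1.trace_eq_sum_eigenvalues, trace]
    push_cast
    simp [mul_apply, RCLike.mul_conj]
  rw [← RCLike.ofReal_prod, RCLike.ofReal_inj] at hdet
  rw [← RCLike.ofReal_sum, RCLike.ofReal_inj] at htrace
  rw [hdet, htrace, ← card_univ]
  exact Real.prod_le_arith_mean_pow _ _ fun i _ ↦ hAA.eigenvalues_nonneg i

theorem norm_add_mul_I_eq_norm_mul_I_sub (a t : ℝ) : ‖(t : ℂ) + a * I‖ = ‖(a : ℂ) * I - t‖ := by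
  rw [← norm_neg, ← RCLike.norm_conj]
  congr 1
  apply Complex.ext <;> simp

-- The Möbius map sending `a * I` to `0` and the real line onto the unit circle.
noncomputable def cayley (a t : ℝ) : ℂ := (t - a * I) / (t + a * I)

section Cayley

variable {a : ℝ}

theorem add_mul_I_ne_zero (ha : a ≠ 0) (t : ℝ) : (t : ℂ) + a * I ≠ 0 := fun h ↦
  ha (by simpa using congrArg Complex.im h)

theorem norm_mul_I_sub_ne_zero (ha : a ≠ 0) (t : ℝ) : ‖(a : ℂ) * I - t‖ ≠ 0 := by
  rw [← norm_add_mul_I_eq_norm_mul_I_sub]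
  exact norm_ne_zero_iff.2 (add_mul_I_ne_zero ha t)

theorem norm_cayley (ha : a ≠ 0) (t : ℝ) : ‖cayley a t‖ = 1 := by
  rw [cayley, norm_div, norm_add_mul_I_eq_norm_mul_I_sub, ← norm_neg, neg_sub,
    div_self (norm_mul_I_sub_ne_zero ha t)]

theorem cayley_sub_cayley (ha : a ≠ 0) (s t : ℝ) :
    cayley a s - cayley a t = 2 * a * I * (s - t) / ((s + a * I) * (t + a * I)) := by
  have := add_mul_I_ne_zero ha s
  have := add_mul_I_ne_zero ha t
  rw [cayley, cayley]
  field_simp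
  ring

theorem norm_cayley_sub_mul (ha : 0 < a) (s t : ℝ) :
    ‖cayley a s - cayley a t‖ * (‖(a : ℂ) * I - s‖ * ‖(a : ℂ) * I - t‖) = 2 * a * |s - t| := by
  have hden := mul_ne_zero (add_mul_I_ne_zero ha.ne' s) (add_mul_I_ne_zero ha.ne' t)
  rw [cayley_sub_cayley ha.ne', ← norm_add_mul_I_eq_norm_mul_I_sub,
    ← norm_add_mul_I_eq_norm_mul_I_sub, ← norm_mul, ← norm_mul, div_mul_cancel₀ _ hden,
    ← Complex.ofReal_sub]
  simp [abs_of_pos ha, -Complex.ofReal_sub]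

theorem cayley_injective (ha : 0 < a) : Function.Injective (cayley a) := fun s t h ↦ by
  have key := norm_cayley_sub_mul ha s t
  rw [h, sub_self, norm_zero, zero_mul, eq_comm] at key
  simpa [ha.ne', sub_eq_zero] using key

theorem log_abs_sub_eq_log_norm_cayley_sub (ha : 0 < a) {s t : ℝ} (hst : s ≠ t) :
    log |s - t| = log ‖(a : ℂ) * I - s‖ + log ‖(a : ℂ) * I - t‖
      + log ‖cayley a s - cayley a t‖ - log (2 * a) := by
  have key := congrArg log (norm_cayley_sub_mul ha s t)
  have hs := norm_mul_I_sub_ne_zero ha.ne' s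
  have ht := norm_mul_I_sub_ne_zero ha.ne' t
  have hw : ‖cayley a s - cayley a t‖ ≠ 0 :=
    norm_ne_zero_iff.2 (sub_ne_zero.2 ((cayley_injective ha).ne hst))
  rw [log_mul hw (mul_ne_zero hs ht), log_mul hs ht, log_mul (by positivity)
    (abs_ne_zero.2 (sub_ne_zero.2 hst))] at key
  linarith

end Cayley

theorem norm_det_vandermonde_sq_le {n : ℕ} (z : Fin n → ℂ) (hz : ∀ k, ‖z k‖ = 1) :
    ‖(vandermonde z).det‖ ^ 2 ≤ (n : ℝ) ^ n := by
  refine (norm_det_sq_le_s18 _).trans_eq ?_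
  rcases eq_or_ne n 0 with rfl | hn
  · simp
  simp [norm_pow, hz, hn]

theorem sum_offDiag_log_norm_sub_le {n : ℕ} (z : Fin n → ℂ) (hz : ∀ k, ‖z k‖ = 1)
    (hinj : Function.Injective z) :
    ∑ p ∈ univ.offDiag, log ‖z p.1 - z p.2‖ ≤ n * log n := by
  have hprod : ∏ p ∈ univ.offDiag, ‖z p.1 - z p.2‖ = ‖(vandermonde z).det‖ ^ 2 := by
    rw [prod_offDiag_eq_sq _ (fun i j ↦ ‖z i - z j‖) fun i j ↦ norm_sub_rev _ _,
      det_vandermonde, norm_prod]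
    simp_rw [norm_prod, filter_lt_eq_Ioi, norm_sub_rev]
  rw [← log_prod fun p hp ↦ norm_ne_zero_iff.2 (sub_ne_zero.2 (hinj.ne (mem_offDiag.1 hp).2.2)),
    hprod, ← log_pow]
  exact log_le_log (pow_pos (norm_pos_iff.2 (det_vandermonde_ne_zero_iff.2 hinj)) 2)
    (norm_det_vandermonde_sq_le z hz)

theorem sum_offDiag_log_abs_sub {a : ℝ} {ι : Type*} [Fintype ι] [DecidableEq ι] (ha : 0 < a)
    {x : ι → ℝ} (hx : Function.Injective x) :
    ∑ p ∈ univ.offDiag, log |x p.1 - x p.2|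
      = 2 * (Fintype.card ι - 1 : ℕ) * ∑ k, log ‖(a : ℂ) * I - x k‖
        + ∑ p ∈ univ.offDiag, log ‖cayley a (x p.1) - cayley a (x p.2)‖
        - (Fintype.card ι * (Fintype.card ι - 1) : ℕ) * log (2 * a) := by
  rw [sum_congr rfl fun p hp ↦
      log_abs_sub_eq_log_norm_cayley_sub ha (hx.ne (mem_offDiag.1 hp).2.2),
    sum_sub_distrib, sum_add_distrib, sum_add_distrib,
    sum_offDiag_fst _ fun k ↦ log ‖(a : ℂ) * I - x k‖,
    sum_offDiag_snd _ fun k ↦ log ‖(a : ℂ) * I - x k‖, sum_const, offDiag_card, card_univ,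
    ← Nat.mul_sub_one]
  simp only [nsmul_eq_mul]
  push_cast
  ring

theorem energy_bound (d : ℕ) (hd : 2 ≤ d) (a v : ℝ) (ha : 0 < a)
    (x : Fin d → ℝ) (hx : Function.Injective x)
    (hv : -(1 / (d : ℝ)) * ∑ k, Real.log ‖(a : ℂ) * Complex.I - (x k : ℂ)‖ = v) :
    -(1 / ((d : ℝ) * (d - 1))) *
        ∑ p ∈ Finset.univ.filter (fun p : Fin d × Fin d => p.1 ≠ p.2),
          Real.log |x p.1 - x p.2| ≥
      2 * v + Real.log (2 * a) - Real.log d / (d - 1) := by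
  have hd1 : (0 : ℝ) < d - 1 := by
    have : (2 : ℝ) ≤ d := by exact_mod_cast hd
    linarith
  have hoff : univ.filter (fun p : Fin d × Fin d ↦ p.1 ≠ p.2) = univ.offDiag := by ext; simp
  have hpot : ∑ k, log ‖(a : ℂ) * I - x k‖ = -(d * v) := by
    rw [← hv]; field_simp
  have hdisc : ∑ p ∈ univ.offDiag, log ‖cayley a (x p.1) - cayley a (x p.2)‖ ≤ d * log d :=
    sum_offDiag_log_norm_sub_le (cayley a ∘ x) (fun _ ↦ norm_cayley ha.ne' _)
      ((cayley_injective ha).comp hx)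
  rw [hoff, sum_offDiag_log_abs_sub ha hx, hpot, Fintype.card_fin, ge_iff_le, ← sub_nonneg]
  push_cast [Nat.cast_sub (by omega : 1 ≤ d)]
  calc 0 ≤ (d * log d - ∑ p ∈ univ.offDiag, log ‖cayley a (x p.1) - cayley a (x p.2)‖)
        / (d * (d - 1)) := div_nonneg (by linarith) (by positivity)
    _ = _ := by field_simp; ring
end
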